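/- Let d ≥ 2 be an integer, n : ℕ, and p ∈ [0,1]. The infimum, over all PPT POVM elements E on the n-copy space, of Re(p · Tr(E · σ_d^{⊗n}) + (1−p) · Tr((1 − E) · α_d^{⊗n})) equals min(p · ((d−1)/(d+1))^n, 1−p), and this infimum is attained: by E = G_d^{⊗n} if p((d−1)/(d+1))^n ≤ 1−p, and by E = 0 otherwise. -/

import Mathlib

open Matrix Finset
open scoped BigOperators Kronecker ComplexOrder

noncomputable section

/-- The flip (swap) operator on `ℂ^d ⊗ ℂ^d`. -/
def Flip (d : ℕ) : Matrix (Fin d × Fin d) (Fin d × Fin d) ℂ :=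
  Matrix.of fun p q => if p.1 = q.2 ∧ p.2 = q.1 then 1 else 0

/-- Projection onto the symmetric subspace, `Π_s = (1 + F)/2`. -/
def projSym (d : ℕ) : Matrix (Fin d × Fin d) (Fin d × Fin d) ℂ :=
  (2 : ℂ)⁻¹ • (1 + Flip d)

/-- Projection onto the antisymmetric subspace, `Π_a = (1 - F)/2`. -/
def projAsym (d : ℕ) : Matrix (Fin d × Fin d) (Fin d × Fin d) ℂ :=
  (2 : ℂ)⁻¹ • (1 - Flip d)

/-- The symmetric Werner state `σ_d = (2/(d(d+1))) • Π_s`. -/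
def wernerSym (d : ℕ) : Matrix (Fin d × Fin d) (Fin d × Fin d) ℂ :=
  (2 / ((d : ℂ) * ((d : ℂ) + 1))) • projSym d

/-- The antisymmetric Werner state `α_d = (2/(d(d-1))) • Π_a`. -/
def wernerAsym (d : ℕ) : Matrix (Fin d × Fin d) (Fin d × Fin d) ℂ :=
  (2 / ((d : ℂ) * ((d : ℂ) - 1))) • projAsym d

/-- The POVM element `G_d`: diagonal, with `(i,j),(i,j)` entry `1` iff `i ≠ j`. -/
def Gmat (d : ℕ) : Matrix (Fin d × Fin d) (Fin d × Fin d) ℂ :=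
  Matrix.diagonal fun p => if p.1 ≠ p.2 then 1 else 0

/-- `n`-fold tensor power of a matrix on `ℂ^d ⊗ ℂ^d`. -/
def tpow {d : ℕ} (n : ℕ) (X : Matrix (Fin d × Fin d) (Fin d × Fin d) ℂ) :
    Matrix (Fin n → Fin d × Fin d) (Fin n → Fin d × Fin d) ℂ :=
  Matrix.of fun f g => ∏ m, X (f m) (g m)

/-- The twirled single-copy POVM element `M_d = ((d-1)/(d+1)) • Π_s + Π_a`. -/
def MdMat (d : ℕ) : Matrix (Fin d × Fin d) (Fin d × Fin d) ℂ :=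
  (((d : ℂ) - 1) / ((d : ℂ) + 1)) • projSym d + projAsym d

/-- `A_k`: sum over all `k`-element subsets `S` of the copies of the tensor product with
`Π_a` on copies in `S` and `Π_s` elsewhere. -/
def Amat (d n k : ℕ) : Matrix (Fin n → Fin d × Fin d) (Fin n → Fin d × Fin d) ℂ :=
  ∑ S ∈ Finset.powersetCard k (Finset.univ : Finset (Fin n)),
    Matrix.of fun f g => ∏ m, (if m ∈ S then projAsym d else projSym d) (f m) (g m)

/-- Partial transpose on `ℂ^d ⊗ ℂ^d`. -/
def pt {d : ℕ} (X : Matrix (Fin d × Fin d) (Fin d × Fin d) ℂ) :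
    Matrix (Fin d × Fin d) (Fin d × Fin d) ℂ :=
  Matrix.of fun p q => X (p.1, q.2) (q.1, p.2)

/-- The maximally entangled state `Φ_d`. -/
def Phi (d : ℕ) : Matrix (Fin d × Fin d) (Fin d × Fin d) ℂ :=
  Matrix.of fun p q => if p.1 = p.2 ∧ q.1 = q.2 then ((d : ℂ))⁻¹ else 0

/-- `n`-copy partial transpose. -/
def ptN {d n : ℕ} (Y : Matrix (Fin n → Fin d × Fin d) (Fin n → Fin d × Fin d) ℂ) :
    Matrix (Fin n → Fin d × Fin d) (Fin n → Fin d × Fin d) ℂ :=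
  Matrix.of fun f g => Y (fun m => ((f m).1, (g m).2)) (fun m => ((g m).1, (f m).2))

/-- `T_l`: sum over all `l`-element subsets `S` of the copies of the tensor product with
`Φ_d` on copies in `S` and `1 - Φ_d` elsewhere. -/
def Tmat (d n l : ℕ) : Matrix (Fin n → Fin d × Fin d) (Fin n → Fin d × Fin d) ℂ :=
  ∑ S ∈ Finset.powersetCard l (Finset.univ : Finset (Fin n)),
    Matrix.of fun f g => ∏ m, (if m ∈ S then Phi d else (1 - Phi d)) (f m) (g m)

/-- The matrix `Q` of the linear program: `Q l k = Σ_{j=0}^{min(l,k)}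
(n−l choose k−j)(l choose j)(1−d)^j (1+d)^{l−j}`. -/
def Qmat (n : ℕ) (d : ℝ) (l k : ℕ) : ℝ :=
  ∑ j ∈ Finset.range (min l k + 1),
    ((n - l).choose (k - j) : ℝ) * (l.choose j : ℝ) * (1 - d) ^ j * (1 + d) ^ (l - j)

/-- A PPT POVM element on the `n`-copy space: `E`, `1 - E`, `E^Γ`, `(1-E)^Γ` all PSD. -/
def IsPPTPovmElem {d n : ℕ}
    (E : Matrix (Fin n → Fin d × Fin d) (Fin n → Fin d × Fin d) ℂ) : Prop :=
  E.PosSemidef ∧ (1 - E).PosSemidef ∧ (ptN E).PosSemidef ∧ (ptN (1 - E)).PosSemidef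

/-- Error probability for discriminating `σ_d^{⊗n}` (prior `p`) from `α_d^{⊗n}`
(prior `1-p`) with the two-outcome POVM `{E, 1 - E}`. -/
def errProb (d n : ℕ) (p : ℝ)
    (E : Matrix (Fin n → Fin d × Fin d) (Fin n → Fin d × Fin d) ℂ) : ℝ :=
  ((p : ℂ) * (E * tpow n (wernerSym d)).trace
    + (1 - (p : ℂ)) * ((1 - E) * tpow n (wernerAsym d)).trace).re

/-- Separability of a bipartite matrix. -/
def IsSep {I J : Type*} [Fintype I] [Fintype J]
    (W : Matrix (I × J) (I × J) ℂ) : Prop :=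
  ∃ (m : ℕ) (A : Fin m → Matrix I I ℂ) (B : Fin m → Matrix J J ℂ),
    (∀ i, (A i).PosSemidef) ∧ (∀ i, (B i).PosSemidef) ∧ W = ∑ i, A i ⊗ₖ B i

/-- Trace norm `‖X‖₁ = Tr √(Xᴴ X)`. -/
def traceNorm {ι : Type*} [Fintype ι] [DecidableEq ι] (X : Matrix ι ι ℂ) : ℝ :=
  ((Matrix.posSemidef_conjTranspose_mul_self X).isHermitian.eigenvectorUnitary.1 *
    Matrix.diagonal (((↑) : ℝ → ℂ) ∘ Real.sqrt ∘
      (Matrix.posSemidef_conjTranspose_mul_self X).isHermitian.eigenvalues) *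
    (star (Matrix.posSemidef_conjTranspose_mul_self X).isHermitian.eigenvectorUnitary :
      Matrix ι ι ℂ)).trace.re

/-- Frobenius (Hilbert–Schmidt) norm `‖X‖₂ = √(Tr (Xᴴ X))`. -/
def frobNorm {ι : Type*} [Fintype ι] (X : Matrix ι ι ℂ) : ℝ :=
  Real.sqrt ((Xᴴ * X).trace.re)

/-!
The value `1 - p` is attained by `E = 0`, and `p r ^ n` with `r = (d - 1) / (d + 1)` by the
projection `G_d^{⊗n}`, which is its own partial transpose; both values come from single-copy
traces, since traces are multiplicative on tensor powers.

For the lower bound put `s = Tr (E σ_d^{⊗n})` and `t = Tr (E α_d^{⊗n}) ∈ [0, 1]`, so that the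
error is `p s + (1 - p) (1 - t)`. The partial transposes of `σ_d` and of `r α_d` are
`(1 ± F^Γ) / (d (d + 1))`, where `F^Γ = d Φ_d ≥ 0`; expanding both tensor powers over the subsets
of copies on which `F^Γ` is taken, the terms of even size cancel and the others appear with
coefficient `2`, so `(σ_d^{⊗n} - r ^ n α_d^{⊗n})^Γ ≥ 0`. As the partial transpose preserves the
trace pairing, `E^Γ ≥ 0` gives `s ≥ r ^ n t`, and then the error is at least the convex
combination `t (p r ^ n) + (1 - t) (1 - p) ≥ min (p r ^ n) (1 - p)`.
-/

theorem Nat.cast_sub_one_ne_zero {R : Type*} [AddGroupWithOne R] [CharZero R] {n : ℕ}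
    (hn : n ≠ 1) : (n : R) - 1 ≠ 0 :=
  sub_ne_zero.mpr (by exact_mod_cast hn)

theorem Finset.prod_add_sub_prod_sub {ι R : Type*} [DecidableEq ι] [CommRing R] (s : Finset ι)
    (a b : ι → R) :
    ∏ i ∈ s, (a i + b i) - ∏ i ∈ s, (a i - b i)
      = ∑ t ∈ s.powerset, (1 - (-1) ^ t.card) * ((∏ i ∈ t, b i) * ∏ i ∈ s \ t, a i) := by
  simp only [sub_eq_add_neg (a _), add_comm (a _), Finset.prod_add, Finset.prod_neg,
    ← Finset.sum_sub_distrib]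
  exact Finset.sum_congr rfl fun t _ => by ring

namespace Matrix

open scoped MatrixOrder

variable {𝕜 κ : Type*} [RCLike 𝕜] [Fintype κ]

theorem PosSemidef.trace_mul_nonneg [DecidableEq κ] {A B : Matrix κ κ 𝕜} (hA : A.PosSemidef)
    (hB : B.PosSemidef) : 0 ≤ (A * B).trace := by
  obtain ⟨Y, rfl⟩ := CStarAlgebra.nonneg_iff_eq_star_mul_self.mp hB.nonneg
  rw [star_eq_conjTranspose, ← Matrix.mul_assoc, trace_mul_cycle]
  exact (hA.mul_mul_conjTranspose_same Y).trace_nonneg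

theorem posSemidef_of_isStarProjection {P : Matrix κ κ 𝕜} (hP : IsStarProjection P) :
    P.PosSemidef :=
  hP.nonneg.posSemidef

theorem isStarProjection_half_smul_one_add [DecidableEq κ] {U : Matrix κ κ 𝕜}
    (hU : U.IsHermitian) (hUU : U * U = 1) : IsStarProjection ((2 : 𝕜)⁻¹ • (1 + U)) where
  isIdempotentElem := by
    rw [IsIdempotentElem, smul_mul_smul_comm, add_mul, mul_add, mul_add, hUU]
    ext i j
    simp only [smul_apply, add_apply, one_mul, mul_one, smul_eq_mul]
    ring
  isSelfAdjoint := by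
    rw [IsSelfAdjoint, star_eq_conjTranspose, conjTranspose_smul, conjTranspose_add,
      conjTranspose_one, hU.eq]
    simp

theorem isStarProjection_half_smul_one_sub [DecidableEq κ] {U : Matrix κ κ 𝕜}
    (hU : U.IsHermitian) (hUU : U * U = 1) : IsStarProjection ((2 : 𝕜)⁻¹ • (1 - U)) := by
  have hU' : (-U).IsHermitian := hU.neg
  simpa [sub_eq_add_neg] using isStarProjection_half_smul_one_add hU' (by simpa using hUU)

end Matrix

section PiTensor

variable {𝕜 ι κ : Type*} [RCLike 𝕜] [Fintype ι]

def piTensor (X : ι → Matrix κ κ 𝕜) : Matrix (ι → κ) (ι → κ) 𝕜 :=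
  Matrix.of fun f g => ∏ i, X i (f i) (g i)

theorem conjTranspose_piTensor (X : ι → Matrix κ κ 𝕜) :
    (piTensor X)ᴴ = piTensor fun i => (X i)ᴴ := by
  ext f g
  simp [piTensor, Matrix.conjTranspose_apply]

variable [DecidableEq ι]

theorem piTensor_add_sub_piTensor_sub (A B : ι → Matrix κ κ 𝕜) :
    piTensor (A + B) - piTensor (A - B)
      = ∑ S ∈ Finset.univ.powerset, (1 - (-1) ^ S.card : 𝕜) • piTensor (S.piecewise B A) := by
  ext f g
  have hS (S : Finset ι) : ∏ i, S.piecewise B A i (f i) (g i)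
      = (∏ i ∈ S, B i (f i) (g i)) * ∏ i ∈ Finset.univ \ S, A i (f i) (g i) := by
    have h := Finset.prod_piecewise Finset.univ S (fun i => B i (f i) (g i))
      fun i => A i (f i) (g i)
    rw [Finset.univ_inter] at h
    rw [← h]
    exact Finset.prod_congr rfl fun i _ => by by_cases hi : i ∈ S <;> simp [hi]
  simp only [piTensor, Matrix.sub_apply, Matrix.sum_apply, Matrix.smul_apply, Matrix.of_apply,
    Pi.add_apply, Pi.sub_apply, Matrix.add_apply, smul_eq_mul, hS]
  exact Finset.prod_add_sub_prod_sub _ _ _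

variable [Fintype κ]

theorem piTensor_mul (X Y : ι → Matrix κ κ 𝕜) :
    piTensor X * piTensor Y = piTensor (X * Y) := by
  ext f g
  simp only [piTensor, Matrix.mul_apply, Matrix.of_apply, Pi.mul_apply, Finset.prod_univ_sum,
    Fintype.piFinset_univ, Finset.prod_mul_distrib]

theorem trace_piTensor (X : ι → Matrix κ κ 𝕜) : (piTensor X).trace = ∏ i, (X i).trace := by
  simp only [Matrix.trace, Matrix.diag, piTensor, Matrix.of_apply, Finset.prod_univ_sum,
    Fintype.piFinset_univ]

theorem Matrix.PosSemidef.piTensor [DecidableEq κ] {X : ι → Matrix κ κ 𝕜}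
    (hX : ∀ i, (X i).PosSemidef) : (piTensor X).PosSemidef := by
  open scoped MatrixOrder in
  choose Y hY using fun i => CStarAlgebra.nonneg_iff_eq_star_mul_self.mp (hX i).nonneg
  have : _root_.piTensor X = (_root_.piTensor Y)ᴴ * _root_.piTensor Y := by
    rw [conjTranspose_piTensor, piTensor_mul]
    exact congrArg _ (funext hY)
  exact this ▸ Matrix.posSemidef_conjTranspose_mul_self _

theorem IsStarProjection.piTensor {P : ι → Matrix κ κ 𝕜} (hP : ∀ i, IsStarProjection (P i)) :
    IsStarProjection (_root_.piTensor P) where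
  isIdempotentElem := by
    rw [IsIdempotentElem, piTensor_mul]
    exact congrArg _ (funext fun i => (hP i).isIdempotentElem)
  isSelfAdjoint := by
    rw [IsSelfAdjoint, Matrix.star_eq_conjTranspose, conjTranspose_piTensor]
    exact congrArg _ (funext fun i => (hP i).isSelfAdjoint)

theorem posSemidef_piTensor_add_sub_piTensor_sub [DecidableEq κ] {A B : ι → Matrix κ κ 𝕜}
    (hA : ∀ i, (A i).PosSemidef) (hB : ∀ i, (B i).PosSemidef) :
    (piTensor (A + B) - piTensor (A - B)).PosSemidef := by
  rw [piTensor_add_sub_piTensor_sub]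
  refine Matrix.posSemidef_sum _ fun S _ => Matrix.PosSemidef.smul ?_ ?_
  · exact .piTensor fun i => by by_cases hi : i ∈ S <;> simp [hi, hA i, hB i]
  · rcases neg_one_pow_eq_or 𝕜 S.card with h | h <;> norm_num [h]

end PiTensor

section SingleCopy

variable {d : ℕ}

theorem flip_apply (p q : Fin d × Fin d) : Flip d p q = if q = p.swap then 1 else 0 := by
  simp only [Flip, Matrix.of_apply, Prod.ext_iff, Prod.fst_swap, Prod.snd_swap, eq_comm, and_comm]

theorem flip_mul_flip : Flip d * Flip d = 1 := by
  ext p q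
  rw [Matrix.mul_apply, Finset.sum_eq_single p.swap (fun x _ hx => by simp [flip_apply, hx])
    (by simp)]
  simp [flip_apply, Matrix.one_apply, eq_comm]

theorem isHermitian_flip : (Flip d).IsHermitian := by
  ext p q
  simp only [Matrix.conjTranspose_apply, flip_apply]
  split_ifs <;> simp_all

theorem trace_flip : (Flip d).trace = d := by
  simp only [Matrix.trace, Matrix.diag, flip_apply, Fintype.sum_prod_type, Prod.swap_prod_mk,
    Prod.mk.injEq, and_iff_left_of_imp Eq.symm]
  simp

theorem isStarProjection_projAsym : IsStarProjection (projAsym d) :=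
  Matrix.isStarProjection_half_smul_one_sub isHermitian_flip flip_mul_flip

theorem isStarProjection_Gmat : IsStarProjection (Gmat d) where
  isIdempotentElem := by
    rw [IsIdempotentElem, Gmat, Matrix.diagonal_mul_diagonal]
    congr 1
    ext p
    split_ifs <;> simp
  isSelfAdjoint := by
    rw [IsSelfAdjoint, Gmat, Matrix.star_eq_conjTranspose, Matrix.diagonal_conjTranspose]
    congr 1
    ext p
    split_ifs <;> simp_all

theorem posSemidef_wernerAsym : (wernerAsym d).PosSemidef := by
  have hd : (0 : ℝ) ≤ d * (d - 1) := by
    rcases d with _ | d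
    · simp
    · push_cast; ring_nf; positivity
  have hc : (0 : ℂ) ≤ ((2 / (d * (d - 1)) : ℝ) : ℂ) := Complex.zero_le_real.mpr (by positivity)
  push_cast at hc
  exact (Matrix.posSemidef_of_isStarProjection isStarProjection_projAsym).smul hc

theorem trace_Gmat_mul (X : Matrix (Fin d × Fin d) (Fin d × Fin d) ℂ) :
    (Gmat d * X).trace = X.trace - ∑ i, X (i, i) (i, i) := by
  have hG : 1 - Gmat d = Matrix.diagonal fun p => if p.1 = p.2 then 1 else 0 := by
    rw [Gmat, ← Matrix.diagonal_one, Matrix.diagonal_sub]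
    congr 1
    ext p
    split_ifs <;> simp_all
  have h : ((1 - Gmat d) * X).trace = ∑ i, X (i, i) (i, i) := by
    simp [hG, Matrix.trace, Matrix.diagonal_mul, Fintype.sum_prod_type]
  rw [← h, sub_mul, one_mul, Matrix.trace_sub]
  ring

theorem trace_projAsym : (projAsym d).trace = 2⁻¹ * (d * d - d) := by
  simp [projAsym, Matrix.trace_sub, trace_flip]

theorem trace_Gmat_mul_projSym : (Gmat d * projSym d).trace = 2⁻¹ * (d * d - d) := by
  simp [trace_Gmat_mul, projSym, flip_apply, Matrix.trace_add, trace_flip]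
  ring

theorem trace_Gmat_mul_projAsym : (Gmat d * projAsym d).trace = 2⁻¹ * (d * d - d) := by
  simp [trace_Gmat_mul, projAsym, flip_apply, Matrix.trace_sub, trace_flip]

theorem trace_wernerAsym (hd : 2 ≤ d) : (wernerAsym d).trace = 1 := by
  have : (d : ℂ) ≠ 0 := Nat.cast_ne_zero.mpr (by omega)
  have := Nat.cast_sub_one_ne_zero (R := ℂ) (n := d) (by omega)
  rw [wernerAsym, Matrix.trace_smul, trace_projAsym, smul_eq_mul]
  field_simp

theorem trace_Gmat_mul_wernerSym (hd : d ≠ 0) :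
    (Gmat d * wernerSym d).trace = (d - 1) / (d + 1) := by
  have : (d : ℂ) ≠ 0 := Nat.cast_ne_zero.mpr hd
  have := Nat.cast_add_one_ne_zero (R := ℂ) d
  rw [wernerSym, Matrix.mul_smul, Matrix.trace_smul, trace_Gmat_mul_projSym, smul_eq_mul]
  field_simp

theorem trace_Gmat_mul_wernerAsym (hd : 2 ≤ d) : (Gmat d * wernerAsym d).trace = 1 := by
  have : (d : ℂ) ≠ 0 := Nat.cast_ne_zero.mpr (by omega)
  have := Nat.cast_sub_one_ne_zero (R := ℂ) (n := d) (by omega)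
  rw [wernerAsym, Matrix.mul_smul, Matrix.trace_smul, trace_Gmat_mul_projAsym, smul_eq_mul]
  field_simp

end SingleCopy

section TensorPower

variable {d n : ℕ}

theorem tpow_eq_piTensor (X : Matrix (Fin d × Fin d) (Fin d × Fin d) ℂ) :
    tpow n X = piTensor fun _ => X := rfl

theorem tpow_smul (c : ℂ) (X : Matrix (Fin d × Fin d) (Fin d × Fin d) ℂ) :
    tpow n (c • X) = c ^ n • tpow n X := by
  ext f g
  simp [tpow, Finset.prod_mul_distrib]

theorem tpow_mul_tpow (X Y : Matrix (Fin d × Fin d) (Fin d × Fin d) ℂ) :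
    tpow n X * tpow n Y = tpow n (X * Y) :=
  piTensor_mul _ _

theorem trace_tpow (X : Matrix (Fin d × Fin d) (Fin d × Fin d) ℂ) :
    (tpow n X).trace = X.trace ^ n := by
  simp [tpow_eq_piTensor, trace_piTensor]

theorem Matrix.PosSemidef.tpow {X : Matrix (Fin d × Fin d) (Fin d × Fin d) ℂ}
    (hX : X.PosSemidef) : (_root_.tpow n X).PosSemidef :=
  .piTensor fun _ => hX

theorem IsStarProjection.tpow {P : Matrix (Fin d × Fin d) (Fin d × Fin d) ℂ}
    (hP : IsStarProjection P) : IsStarProjection (_root_.tpow n P) :=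
  .piTensor fun _ => hP

end TensorPower

section PartialTranspose

variable {d n : ℕ}

theorem pt_add (A B : Matrix (Fin d × Fin d) (Fin d × Fin d) ℂ) : pt (A + B) = pt A + pt B := rfl

theorem pt_sub (A B : Matrix (Fin d × Fin d) (Fin d × Fin d) ℂ) : pt (A - B) = pt A - pt B := rfl

theorem pt_smul (c : ℂ) (A : Matrix (Fin d × Fin d) (Fin d × Fin d) ℂ) :
    pt (c • A) = c • pt A := rfl

theorem pt_one : pt (1 : Matrix (Fin d × Fin d) (Fin d × Fin d) ℂ) = 1 := by
  ext p q
  simp only [pt, Matrix.of_apply, Matrix.one_apply, Prod.ext_iff]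
  by_cases h1 : p.1 = q.1 <;> by_cases h2 : p.2 = q.2 <;> simp [h1, h2, eq_comm]

theorem pt_Gmat : pt (Gmat d) = Gmat d := by
  ext p q
  simp only [pt, Gmat, Matrix.of_apply, Matrix.diagonal_apply, Prod.ext_iff]
  by_cases h1 : p.1 = q.1 <;> by_cases h2 : p.2 = q.2 <;> simp_all [eq_comm]

theorem posSemidef_pt_flip : (pt (Flip d)).PosSemidef := by
  have : pt (Flip d) = Matrix.vecMulVec (fun p => if p.1 = p.2 then 1 else 0)
      (star fun p => if p.1 = p.2 then 1 else 0) := by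
    ext p q
    simp [pt, Matrix.vecMulVec_apply, flip_apply, Prod.ext_iff, ite_and, eq_comm]
  exact this ▸ Matrix.posSemidef_vecMulVec_self_star _

theorem pt_wernerSym : pt (wernerSym d) = ((d : ℂ) * (d + 1))⁻¹ • (1 + pt (Flip d)) := by
  rw [wernerSym, projSym, pt_smul, pt_smul, pt_add, pt_one, smul_smul]
  congr 1
  ring

theorem smul_pt_wernerAsym (hd : 2 ≤ d) :
    (((d : ℂ) - 1) / (d + 1)) • pt (wernerAsym d)
      = ((d : ℂ) * (d + 1))⁻¹ • (1 - pt (Flip d)) := by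
  have := Nat.cast_sub_one_ne_zero (R := ℂ) (n := d) (by omega)
  rw [wernerAsym, projAsym, pt_smul, pt_smul, pt_sub, pt_one, smul_smul, smul_smul]
  congr 1
  field_simp

theorem ptN_sub (A B : Matrix (Fin n → Fin d × Fin d) (Fin n → Fin d × Fin d) ℂ) :
    ptN (A - B) = ptN A - ptN B := rfl

theorem ptN_smul (c : ℂ) (A : Matrix (Fin n → Fin d × Fin d) (Fin n → Fin d × Fin d) ℂ) :
    ptN (c • A) = c • ptN A := rfl

theorem ptN_tpow (X : Matrix (Fin d × Fin d) (Fin d × Fin d) ℂ) :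
    ptN (tpow n X) = tpow n (pt X) := rfl

theorem ptN_one : ptN (1 : Matrix (Fin n → Fin d × Fin d) (Fin n → Fin d × Fin d) ℂ) = 1 := by
  ext f g
  simp only [ptN, Matrix.of_apply, Matrix.one_apply, funext_iff, Prod.ext_iff,
    @eq_comm _ (g _).2]

theorem trace_ptN_mul_ptN (A B : Matrix (Fin n → Fin d × Fin d) (Fin n → Fin d × Fin d) ℂ) :
    (ptN A * ptN B).trace = (A * B).trace := by
  simp only [Matrix.trace, Matrix.diag, Matrix.mul_apply, ptN, Matrix.of_apply,
    ← Fintype.sum_prod_type']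
  let e (p : (Fin n → Fin d × Fin d) × (Fin n → Fin d × Fin d)) :
      (Fin n → Fin d × Fin d) × (Fin n → Fin d × Fin d) :=
    (fun m => ((p.1 m).1, (p.2 m).2), fun m => ((p.2 m).1, (p.1 m).2))
  have he : Function.Involutive e := fun _ => rfl
  exact Fintype.sum_bijective e he.bijective _ _ fun _ => rfl

theorem posSemidef_ptN_tpow_wernerSym_sub (hd : 2 ≤ d) :
    (ptN (tpow n (wernerSym d)
      - (((d : ℂ) - 1) / (d + 1)) ^ n • tpow n (wernerAsym d))).PosSemidef := by
  have hc : (0 : ℂ) ≤ ((((d : ℝ) * (d + 1))⁻¹ ^ n : ℝ) : ℂ) :=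
    Complex.zero_le_real.mpr (by positivity)
  push_cast at hc
  rw [ptN_sub, ptN_smul, ptN_tpow, ptN_tpow, ← tpow_smul, pt_wernerSym, smul_pt_wernerAsym hd,
    tpow_smul, tpow_smul, ← smul_sub]
  exact Matrix.PosSemidef.smul
    (posSemidef_piTensor_add_sub_piTensor_sub (fun _ => .one) fun _ => posSemidef_pt_flip) hc

end PartialTranspose

section PPT

variable {d n : ℕ}

theorem IsPPTPovmElem.of_isStarProjection
    {E : Matrix (Fin n → Fin d × Fin d) (Fin n → Fin d × Fin d) ℂ} (hE : IsStarProjection E)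
    (hΓ : ptN E = E) : IsPPTPovmElem E := by
  have h₁ := Matrix.posSemidef_of_isStarProjection hE
  have h₂ := Matrix.posSemidef_of_isStarProjection hE.one_sub
  exact ⟨h₁, h₂, hΓ ▸ h₁, by rwa [ptN_sub, ptN_one, hΓ]⟩

theorem isPPTPovmElem_tpow_Gmat : IsPPTPovmElem (tpow n (Gmat d)) :=
  .of_isStarProjection isStarProjection_Gmat.tpow (by rw [ptN_tpow, pt_Gmat])

theorem isPPTPovmElem_zero :
    IsPPTPovmElem (0 : Matrix (Fin n → Fin d × Fin d) (Fin n → Fin d × Fin d) ℂ) :=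
  .of_isStarProjection (.zero _) rfl

theorem IsPPTPovmElem.trace_mul_nonneg
    {E X : Matrix (Fin n → Fin d × Fin d) (Fin n → Fin d × Fin d) ℂ} (hE : IsPPTPovmElem E)
    (hX : (ptN X).PosSemidef) : 0 ≤ (E * X).trace :=
  trace_ptN_mul_ptN E X ▸ hE.2.2.1.trace_mul_nonneg hX

end PPT

section ErrorProbability

variable {d n : ℕ}

theorem errProb_eq (hd : 2 ≤ d) (p : ℝ)
    (E : Matrix (Fin n → Fin d × Fin d) (Fin n → Fin d × Fin d) ℂ) :
    errProb d n p E = p * (E * tpow n (wernerSym d)).trace.re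
      + (1 - p) * (1 - (E * tpow n (wernerAsym d)).trace.re) := by
  rw [errProb, Matrix.sub_mul, Matrix.one_mul, Matrix.trace_sub, trace_tpow, trace_wernerAsym hd,
    one_pow]
  simp [Complex.mul_re]

theorem errProb_tpow_Gmat (hd : 2 ≤ d) (p : ℝ) :
    errProb d n p (tpow n (Gmat d)) = p * (((d : ℝ) - 1) / ((d : ℝ) + 1)) ^ n := by
  rw [errProb_eq hd, tpow_mul_tpow, tpow_mul_tpow, trace_tpow, trace_tpow,
    trace_Gmat_mul_wernerSym (by omega), trace_Gmat_mul_wernerAsym hd]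
  norm_cast
  simp

theorem errProb_zero (hd : 2 ≤ d) (p : ℝ) :
    errProb d n p (0 : Matrix (Fin n → Fin d × Fin d) (Fin n → Fin d × Fin d) ℂ) = 1 - p := by
  simp [errProb_eq hd]

theorem min_le_mul_add_mul_one_sub {p q s t : ℝ} (hp : 0 ≤ p) (ht₀ : 0 ≤ t) (ht₁ : t ≤ 1)
    (hs : q * t ≤ s) : min (p * q) (1 - p) ≤ p * s + (1 - p) * (1 - t) := by
  rcases le_total (p * q) (1 - p) with h | h
  · rw [min_eq_left h]
    nlinarith [mul_le_mul_of_nonneg_left hs hp, mul_le_mul_of_nonneg_right h (sub_nonneg.2 ht₁)]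
  · rw [min_eq_right h]
    nlinarith [mul_le_mul_of_nonneg_left hs hp, mul_le_mul_of_nonneg_right h ht₀]

theorem min_le_errProb (hd : 2 ≤ d) {p : ℝ} (hp : 0 ≤ p)
    {E : Matrix (Fin n → Fin d × Fin d) (Fin n → Fin d × Fin d) ℂ} (hE : IsPPTPovmElem E) :
    min (p * (((d : ℝ) - 1) / ((d : ℝ) + 1)) ^ n) (1 - p) ≤ errProb d n p E := by
  rw [errProb_eq hd]
  have hα := (posSemidef_wernerAsym (d := d)).tpow (n := n)
  have ht₀ := hE.1.trace_mul_nonneg hα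
  have ht₁ := hE.2.1.trace_mul_nonneg hα
  have hs := hE.trace_mul_nonneg (posSemidef_ptN_tpow_wernerSym_sub (n := n) hd)
  rw [Matrix.sub_mul, Matrix.one_mul, Matrix.trace_sub, trace_tpow, trace_wernerAsym hd,
    one_pow] at ht₁
  rw [Matrix.mul_sub, Matrix.mul_smul, Matrix.trace_sub, Matrix.trace_smul] at hs
  refine min_le_mul_add_mul_one_sub hp (Complex.nonneg_iff.1 ht₀).1 ?_ ?_
  · exact sub_nonneg.1 (by simpa using (Complex.nonneg_iff.1 ht₁).1)
  · have hc : (((d : ℂ) - 1) / (d + 1)) ^ n = ((((d : ℝ) - 1) / ((d : ℝ) + 1)) ^ n : ℝ) := by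
      push_cast; rfl
    rw [hc, smul_eq_mul] at hs
    have h := (Complex.nonneg_iff.1 hs).1
    rw [Complex.sub_re, Complex.re_ofReal_mul] at h
    linarith

end ErrorProbability

theorem ppt_optimal_error_general (d : ℕ) (hd : 2 ≤ d) (n : ℕ) (p : ℝ)
    (hp0 : 0 ≤ p) :
    IsLeast { x : ℝ |
        ∃ E : Matrix (Fin n → Fin d × Fin d) (Fin n → Fin d × Fin d) ℂ,
          IsPPTPovmElem E ∧ x = errProb d n p E }
      (min (p * (((d : ℝ) - 1) / ((d : ℝ) + 1)) ^ n) (1 - p)) ∧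
    (p * (((d : ℝ) - 1) / ((d : ℝ) + 1)) ^ n ≤ 1 - p →
      IsPPTPovmElem (tpow n (Gmat d)) ∧
      errProb d n p (tpow n (Gmat d))
        = min (p * (((d : ℝ) - 1) / ((d : ℝ) + 1)) ^ n) (1 - p)) ∧
    (¬ p * (((d : ℝ) - 1) / ((d : ℝ) + 1)) ^ n ≤ 1 - p →
      IsPPTPovmElem (0 : Matrix (Fin n → Fin d × Fin d) (Fin n → Fin d × Fin d) ℂ) ∧
      errProb d n p (0 : Matrix (Fin n → Fin d × Fin d) (Fin n → Fin d × Fin d) ℂ)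
        = min (p * (((d : ℝ) - 1) / ((d : ℝ) + 1)) ^ n) (1 - p)) := by
  refine ⟨⟨?_, ?_⟩,
    fun h => ⟨isPPTPovmElem_tpow_Gmat, by rw [errProb_tpow_Gmat hd, min_eq_left h]⟩,
    fun h => ⟨isPPTPovmElem_zero, by rw [errProb_zero hd, min_eq_right (le_of_not_ge h)]⟩⟩
  · rcases le_or_gt (p * (((d : ℝ) - 1) / ((d : ℝ) + 1)) ^ n) (1 - p) with h | h
    · exact ⟨_, isPPTPovmElem_tpow_Gmat, by rw [errProb_tpow_Gmat hd, min_eq_left h]⟩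
    · exact ⟨0, isPPTPovmElem_zero, by rw [errProb_zero hd, min_eq_right h.le]⟩
  · rintro x ⟨E, hE, rfl⟩
    exact min_le_errProb hd hp0 hE

/-- the optimal PPT error is `min(p((d−1)/(d+1))^n, 1−p)`, attained by
`G_d^{⊗n}` when `p((d−1)/(d+1))^n ≤ 1−p` and by `E = 0` otherwise. -/
theorem ppt_optimal_error (d : ℕ) (hd : 2 ≤ d) (n : ℕ) (p : ℝ)
    (hp0 : 0 ≤ p) (hp1 : p ≤ 1) :
    IsLeast { x : ℝ |
        ∃ E : Matrix (Fin n → Fin d × Fin d) (Fin n → Fin d × Fin d) ℂ,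
          IsPPTPovmElem E ∧ x = errProb d n p E }
      (min (p * (((d : ℝ) - 1) / ((d : ℝ) + 1)) ^ n) (1 - p)) ∧
    (p * (((d : ℝ) - 1) / ((d : ℝ) + 1)) ^ n ≤ 1 - p →
      IsPPTPovmElem (tpow n (Gmat d)) ∧
      errProb d n p (tpow n (Gmat d))
        = min (p * (((d : ℝ) - 1) / ((d : ℝ) + 1)) ^ n) (1 - p)) ∧
    (¬ p * (((d : ℝ) - 1) / ((d : ℝ) + 1)) ^ n ≤ 1 - p →
      IsPPTPovmElem (0 : Matrix (Fin n → Fin d × Fin d) (Fin n → Fin d × Fin d) ℂ) ∧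
      errProb d n p (0 : Matrix (Fin n → Fin d × Fin d) (Fin n → Fin d × Fin d) ℂ)
        = min (p * (((d : ℝ) - 1) / ((d : ℝ) + 1)) ^ n) (1 - p)) :=
  ppt_optimal_error_general d hd n p hp0

end
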